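/- arXiv:2605.19962 — 3 statements merged into one kernel-verified Lean document; each statement's English description precedes it below -/
import Mathlib

section
/- If a rooted binary phylogenetic network admits a cherry cover (every non-root arc covered exactly once by a cherry shape or reticulation cherry shape), then the number of shapes in the cover equals the number of reticulations plus the number of leaves minus 1. -/
/-- A directed graph with a distinguished root, modelling a phylogenetic network. -/
structure Net (V : Type*) where
  verts : Set V
  root : V
  arcs : Set (V × V)

namespace Net

variable {V : Type*}

/-- In-degree of a vertex. -/
noncomputable def indeg (N : Net V) (v : V) : ℕ := {a ∈ N.arcs | a.2 = v}.ncard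

/-- Out-degree of a vertex. -/
noncomputable def outdeg (N : Net V) (v : V) : ℕ := {a ∈ N.arcs | a.1 = v}.ncard

/-- A leaf: indegree 1, outdegree 0. -/
def IsLeafV (N : Net V) (v : V) : Prop := v ∈ N.verts ∧ N.indeg v = 1 ∧ N.outdeg v = 0

/-- A tree vertex: indegree 1, outdegree 2. -/
def IsTreeV (N : Net V) (v : V) : Prop := v ∈ N.verts ∧ N.indeg v = 1 ∧ N.outdeg v = 2

/-- A reticulation: indegree 2, outdegree 1. -/
def IsReticV (N : Net V) (v : V) : Prop := v ∈ N.verts ∧ N.indeg v = 2 ∧ N.outdeg v = 1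

/-- The arc relation of the network. -/
def arcRel (N : Net V) (u w : V) : Prop := (u, w) ∈ N.arcs

/-- `N` is a rooted binary phylogenetic network. -/
def IsPhylo (N : Net V) : Prop :=
  N.verts.Finite ∧ N.arcs.Finite ∧ N.root ∈ N.verts ∧
  (∀ a ∈ N.arcs, a.1 ∈ N.verts ∧ a.2 ∈ N.verts) ∧
  N.indeg N.root = 0 ∧ N.outdeg N.root = 1 ∧
  (∀ v ∈ N.verts, v = N.root ∨ N.IsTreeV v ∨ N.IsReticV v ∨ N.IsLeafV v) ∧
  (∀ v : V, ¬ Relation.TransGen N.arcRel v v)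

end Net

open Net
/-- A cherry shape `cherry p x y` (arcs `px, py`) or a reticulation cherry shape
`retic px py x y` (arcs `p_x x, p_y p_x, p_y y`). -/
inductive Shape (V : Type*) where
  | cherry (p x y : V)
  | retic (px py x y : V)

namespace Shape

variable {V : Type*}

/-- The arcs covered by a shape. -/
def shapeArcs : Shape V → Set (V × V)
  | .cherry p x y => {(p, x), (p, y)}
  | .retic px py x y => {(px, x), (py, px), (py, y)}

/-- The endpoints of a shape. -/
def endpoints : Shape V → Set V
  | .cherry _ x y => {x, y}
  | .retic _ _ x y => {x, y}

/-- The internal vertices of a shape. -/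
def internals : Shape V → Set V
  | .cherry p _ _ => {p}
  | .retic px py _ _ => {px, py}

/-- Whether the shape is a reticulation cherry shape. -/
def IsReticShape : Shape V → Prop
  | .cherry _ _ _ => False
  | .retic _ _ _ _ => True

/-- Validity of a shape inside a network `N`: its arcs are pairwise distinct and
the distinguished vertex `p_x` of a reticulation cherry shape is a reticulation. -/
def IsValid (N : Net V) : Shape V → Prop
  | .cherry _ x y => x ≠ y
  | .retic px py x y => N.IsReticV px ∧ px ≠ py ∧ px ≠ y ∧ x ≠ y

end Shape

namespace Net

variable {V : Type*}

/-- A cherry cover of `N`: a collection of valid cherry shapes and reticulation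
cherry shapes such that every arc of `N` except the root arc is covered exactly
once, and the root arc is covered by no shape. -/
def IsCherryCover (N : Net V) (P : Set (Shape V)) : Prop :=
  (∀ S ∈ P, S.shapeArcs ⊆ N.arcs ∧ S.IsValid N) ∧
  (∀ a ∈ N.arcs, a.1 ≠ N.root → ∃! S : Shape V, S ∈ P ∧ a ∈ S.shapeArcs) ∧
  (∀ S ∈ P, ∀ a ∈ S.shapeArcs, a.1 ≠ N.root)

/-- The arc relation of the cherry covering auxiliary graph of `P`:
there is an arc from `B` to `B'` if an internal vertex of `B'` is an endpoint of `B`. -/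
def AuxRel (P : Set (Shape V)) (B B' : Shape V) : Prop :=
  B ∈ P ∧ B' ∈ P ∧ ∃ w ∈ B'.internals, w ∈ B.endpoints

/-- A cherry cover is acyclic if its auxiliary graph has no directed cycle. -/
def AuxAcyclic (P : Set (Shape V)) : Prop :=
  ∀ B : Shape V, ¬ Relation.TransGen (AuxRel P) B B

end Net

namespace CherryAux

variable {V : Type*}

open Classical in
/-- Finset of arcs of a shape. -/
noncomputable def sArcs : Shape V → Finset (V × V)
  | .cherry p x y => {(p, x), (p, y)}
  | .retic px py x y => {(px, x), (py, px), (py, y)}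

lemma mem_sArcs {a : V × V} {S : Shape V} : a ∈ sArcs S ↔ a ∈ S.shapeArcs := by
  classical
  cases S <;> simp [sArcs, Shape.shapeArcs]

lemma card_sArcs_cherry {p x y : V} (h : x ≠ y) :
    (sArcs (Shape.cherry p x y)).card = 2 := by
  classical
  simp only [sArcs]
  rw [Finset.card_insert_of_notMem (by simp [h]), Finset.card_singleton]

lemma card_sArcs_retic {px py x y : V} (h1 : px ≠ py) (h2 : px ≠ y) :
    (sArcs (Shape.retic px py x y)).card = 3 := by
  classical
  simp only [sArcs]
  rw [Finset.card_insert_of_notMem (by simp [h1]),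
    Finset.card_insert_of_notMem (by simp [h2]), Finset.card_singleton]

/-- The distinguished first vertex of a shape. -/
def pxOf : Shape V → V
  | .cherry p _ _ => p
  | .retic px _ _ _ => px

end CherryAux

open CherryAux in
/-- If a rooted binary phylogenetic network admits a cherry cover, then the
number of shapes in the cover equals the number of reticulations plus the
number of leaves minus 1. -/
theorem cherry_cover_card {V : Type*} (N : Net V) (hN : N.IsPhylo)
    (P : Set (Shape V)) (hP : N.IsCherryCover P) (hPfin : P.Finite) :
    P.ncard + 1 =
      {v ∈ N.verts | N.IsReticV v}.ncard + {v ∈ N.verts | N.IsLeafV v}.ncard := by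
  classical
  obtain ⟨hVfin, hAfin, hrootmem, hends, hrin, hrout, hclass, -⟩ := hN
  obtain ⟨hvalid, hcover, hnoroot⟩ := hP
  set Wf := hVfin.toFinset with hWfdef
  set Af := hAfin.toFinset with hAfdef
  set Pf := hPfin.toFinset with hPfdef
  have hWmem : ∀ v, v ∈ Wf ↔ v ∈ N.verts := fun v => hVfin.mem_toFinset
  have hAmem : ∀ a, a ∈ Af ↔ a ∈ N.arcs := fun a => hAfin.mem_toFinset
  have hPmem : ∀ S, S ∈ Pf ↔ S ∈ P := fun S => hPfin.mem_toFinset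
  -- degrees as filter cards
  have houtd : ∀ v, N.outdeg v = (Af.filter (fun a => a.1 = v)).card := by
    intro v
    have h : {a ∈ N.arcs | a.1 = v} = ↑(Af.filter (fun a => a.1 = v)) := by
      ext a; simp [hAmem a]
    unfold Net.outdeg
    rw [h, Set.ncard_coe_finset]
  have hind : ∀ v, N.indeg v = (Af.filter (fun a => a.2 = v)).card := by
    intro v
    have h : {a ∈ N.arcs | a.2 = v} = ↑(Af.filter (fun a => a.2 = v)) := by
      ext a; simp [hAmem a]
    unfold Net.indeg
    rw [h, Set.ncard_coe_finset]
  -- if a vertex has outdegree 1, its out-neighbour is unique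
  have houtuniq : ∀ v a b, (v, a) ∈ N.arcs → (v, b) ∈ N.arcs → N.outdeg v = 1 → a = b := by
    intro v a b ha hb hdeg
    by_contra hne
    have hsub : ({(v, a), (v, b)} : Set (V × V)) ⊆ {x ∈ N.arcs | x.1 = v} := by
      rintro c (rfl | rfl) <;> simp [ha, hb]
    have h2 : ({(v, a), (v, b)} : Set (V × V)).ncard = 2 :=
      Set.ncard_pair (by simp [hne])
    have hle := Set.ncard_le_ncard hsub (hAfin.subset fun x hx => hx.1)
    rw [h2] at hle
    unfold Net.outdeg at hdeg
    omega
  -- degree sums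
  have hsumout : Af.card = ∑ v ∈ Wf, N.outdeg v := by
    rw [Finset.card_eq_sum_card_fiberwise
      (f := Prod.fst) (t := Wf) (fun a ha => (hWmem _).2 (hends a ((hAmem a).1 ha)).1)]
    exact Finset.sum_congr rfl fun v _ => (houtd v).symm
  have hsumin : Af.card = ∑ v ∈ Wf, N.indeg v := by
    rw [Finset.card_eq_sum_card_fiberwise
      (f := Prod.snd) (t := Wf) (fun a ha => (hWmem _).2 (hends a ((hAmem a).1 ha)).2)]
    exact Finset.sum_congr rfl fun v _ => (hind v).symm
  -- pointwise degree values
  have hptout : ∀ v ∈ Wf, N.outdeg v =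
      (if v = N.root then 1 else 0) +
        (2 * (if N.IsTreeV v then 1 else 0) + (if N.IsReticV v then 1 else 0)) := by
    intro v hv
    rcases hclass v ((hWmem v).1 hv) with rfl | ht | hr | hl
    · have h1 : ¬ N.IsTreeV N.root := fun h => by have := h.2.1; omega
      have h2 : ¬ N.IsReticV N.root := fun h => by have := h.2.1; omega
      simp [h1, h2, hrout]
    · have h1 : v ≠ N.root := fun h => by have := ht.2.1; rw [h, hrin] at this; omega
      have h2 : ¬ N.IsReticV v := fun h => by have := h.2.1; have := ht.2.1; omega
      simp [h1, h2, ht, ht.2.2]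
    · have h1 : v ≠ N.root := fun h => by have := hr.2.1; rw [h, hrin] at this; omega
      have h2 : ¬ N.IsTreeV v := fun h => by have := h.2.1; have := hr.2.1; omega
      simp [h1, h2, hr, hr.2.2]
    · have h1 : v ≠ N.root := fun h => by have := hl.2.1; rw [h, hrin] at this; omega
      have h2 : ¬ N.IsTreeV v := fun h => by have := h.2.2; have := hl.2.2; omega
      have h3 : ¬ N.IsReticV v := fun h => by have := h.2.1; have := hl.2.1; omega
      simp [h1, h2, h3, hl.2.2]
  have hptin : ∀ v ∈ Wf, N.indeg v =
      (if N.IsTreeV v then 1 else 0) +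
        (2 * (if N.IsReticV v then 1 else 0) + (if N.IsLeafV v then 1 else 0)) := by
    intro v hv
    rcases hclass v ((hWmem v).1 hv) with rfl | ht | hr | hl
    · have h1 : ¬ N.IsTreeV N.root := fun h => by have := h.2.1; omega
      have h2 : ¬ N.IsReticV N.root := fun h => by have := h.2.1; omega
      have h3 : ¬ N.IsLeafV N.root := fun h => by have := h.2.1; omega
      simp [h1, h2, h3, hrin]
    · have h2 : ¬ N.IsReticV v := fun h => by have := h.2.1; have := ht.2.1; omega
      have h3 : ¬ N.IsLeafV v := fun h => by have := h.2.2; have := ht.2.2; omega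
      simp [h2, h3, ht, ht.2.1]
    · have h2 : ¬ N.IsTreeV v := fun h => by have := h.2.1; have := hr.2.1; omega
      have h3 : ¬ N.IsLeafV v := fun h => by have := h.2.1; have := hr.2.1; omega
      simp [h2, h3, hr, hr.2.1]
    · have h2 : ¬ N.IsTreeV v := fun h => by have := h.2.2; have := hl.2.2; omega
      have h3 : ¬ N.IsReticV v := fun h => by have := h.2.1; have := hl.2.1; omega
      simp [h2, h3, hl, hl.2.1]
  have hout : Af.card = (Wf.filter (fun v => v = N.root)).card +
      (2 * (Wf.filter (fun v => N.IsTreeV v)).card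
        + (Wf.filter (fun v => N.IsReticV v)).card) := by
    have hA : ∑ v ∈ Wf, (if v = N.root then 1 else 0)
        = (Wf.filter (fun v => v = N.root)).card := (Finset.card_filter _ _).symm
    have hB : ∑ v ∈ Wf, (if N.IsTreeV v then 1 else 0)
        = (Wf.filter (fun v => N.IsTreeV v)).card := (Finset.card_filter _ _).symm
    have hC : ∑ v ∈ Wf, (if N.IsReticV v then 1 else 0)
        = (Wf.filter (fun v => N.IsReticV v)).card := (Finset.card_filter _ _).symm
    rw [hsumout, Finset.sum_congr rfl hptout, Finset.sum_add_distrib, Finset.sum_add_distrib,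
      ← Finset.mul_sum, hA, hB, hC]
  have hin : Af.card = (Wf.filter (fun v => N.IsTreeV v)).card +
      (2 * (Wf.filter (fun v => N.IsReticV v)).card
        + (Wf.filter (fun v => N.IsLeafV v)).card) := by
    have hA : ∑ v ∈ Wf, (if N.IsTreeV v then 1 else 0)
        = (Wf.filter (fun v => N.IsTreeV v)).card := (Finset.card_filter _ _).symm
    have hB : ∑ v ∈ Wf, (if N.IsReticV v then 1 else 0)
        = (Wf.filter (fun v => N.IsReticV v)).card := (Finset.card_filter _ _).symm
    have hC : ∑ v ∈ Wf, (if N.IsLeafV v then 1 else 0)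
        = (Wf.filter (fun v => N.IsLeafV v)).card := (Finset.card_filter _ _).symm
    rw [hsumin, Finset.sum_congr rfl hptin, Finset.sum_add_distrib, Finset.sum_add_distrib,
      ← Finset.mul_sum, hA, hB, hC]
  have hrootcard : (Wf.filter (fun v => v = N.root)).card = 1 := by
    have h : Wf.filter (fun v => v = N.root) = {N.root} := by
      ext v
      simp only [Finset.mem_filter, Finset.mem_singleton]
      exact ⟨fun h => h.2, fun h => ⟨h ▸ (hWmem _).2 hrootmem, h⟩⟩
    rw [h, Finset.card_singleton]
  -- arcs split by root arc
  have hsplitA : (Af.filter (fun a => a.1 = N.root)).card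
      + (Af.filter (fun a => ¬ a.1 = N.root)).card = Af.card :=
    Finset.card_filter_add_card_filter_not _
  have hrootarc : (Af.filter (fun a => a.1 = N.root)).card = 1 :=
    (houtd N.root).symm.trans hrout
  -- non-root arcs are the disjoint union of the shape arcs
  have hbieq : Af.filter (fun a => ¬ a.1 = N.root) = Pf.biUnion sArcs := by
    ext a
    simp only [Finset.mem_filter, Finset.mem_biUnion, hAmem, hPmem, mem_sArcs]
    constructor
    · rintro ⟨ha, hr⟩
      obtain ⟨S, ⟨hS, haS⟩, -⟩ := hcover a ha hr
      exact ⟨S, hS, haS⟩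
    · rintro ⟨S, hS, haS⟩
      exact ⟨(hvalid S hS).1 haS, hnoroot S hS a haS⟩
  have hdisj : ∀ S ∈ Pf, ∀ S' ∈ Pf, S ≠ S' → Disjoint (sArcs S) (sArcs S') := by
    intro S hS S' hS' hne
    rw [Finset.disjoint_left]
    intro a haS haS'
    have haS1 : a ∈ S.shapeArcs := mem_sArcs.1 haS
    have haS1' : a ∈ S'.shapeArcs := mem_sArcs.1 haS'
    have haA : a ∈ N.arcs := (hvalid S ((hPmem S).1 hS)).1 haS1
    have hr := hnoroot S ((hPmem S).1 hS) a haS1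
    obtain ⟨S0, hS0, huniq⟩ := hcover a haA hr
    exact hne ((huniq S ⟨(hPmem S).1 hS, haS1⟩).trans
      (huniq S' ⟨(hPmem S').1 hS', haS1'⟩).symm)
  have hbicard : (Af.filter (fun a => ¬ a.1 = N.root)).card = ∑ S ∈ Pf, (sArcs S).card := by
    rw [hbieq, Finset.card_biUnion hdisj]
  -- split the shape sum into cherries and reticulated cherries
  have hsplitP : ∑ S ∈ Pf.filter (fun S => S.IsReticShape), (sArcs S).card
      + ∑ S ∈ Pf.filter (fun S => ¬ S.IsReticShape), (sArcs S).card
      = ∑ S ∈ Pf, (sArcs S).card :=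
    Finset.sum_filter_add_sum_filter_not _ _ _
  have hretsum : ∑ S ∈ Pf.filter (fun S => S.IsReticShape), (sArcs S).card
      = (Pf.filter (fun S => S.IsReticShape)).card * 3 := by
    rw [Finset.sum_congr rfl (g := fun _ => 3) ?_, Finset.sum_const, smul_eq_mul]
    intro S hS
    obtain ⟨hS1, hS2⟩ := Finset.mem_filter.1 hS
    cases S with
    | cherry p x y => exact absurd hS2 (by simp [Shape.IsReticShape])
    | retic px py x y =>
      have hv := (hvalid _ ((hPmem _).1 hS1)).2
      exact card_sArcs_retic hv.2.1 hv.2.2.1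
  have hchsum : ∑ S ∈ Pf.filter (fun S => ¬ S.IsReticShape), (sArcs S).card
      = (Pf.filter (fun S => ¬ S.IsReticShape)).card * 2 := by
    rw [Finset.sum_congr rfl (g := fun _ => 2) ?_, Finset.sum_const, smul_eq_mul]
    intro S hS
    obtain ⟨hS1, hS2⟩ := Finset.mem_filter.1 hS
    cases S with
    | retic px py x y => exact absurd trivial hS2
    | cherry p x y =>
      have hv := (hvalid _ ((hPmem _).1 hS1)).2
      exact card_sArcs_cherry hv
  have hsplitPc : (Pf.filter (fun S => S.IsReticShape)).card
      + (Pf.filter (fun S => ¬ S.IsReticShape)).card = Pf.card :=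
    Finset.card_filter_add_card_filter_not _
  -- number of reticulated-cherry shapes = number of reticulations
  have hretbij : (Pf.filter (fun S => S.IsReticShape)).card
      = (Wf.filter (fun v => N.IsReticV v)).card := by
    apply Finset.card_bij (fun S _ => pxOf S)
    · intro S hS
      obtain ⟨hS1, hS2⟩ := Finset.mem_filter.1 hS
      cases S with
      | cherry p x y => exact absurd hS2 (by simp [Shape.IsReticShape])
      | retic px py x y =>
        have hv := (hvalid _ ((hPmem _).1 hS1)).2.1
        exact Finset.mem_filter.2 ⟨(hWmem _).2 hv.1, hv⟩
    · intro S1 h1 S2 h2 heq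
      obtain ⟨h11, h12⟩ := Finset.mem_filter.1 h1
      obtain ⟨h21, h22⟩ := Finset.mem_filter.1 h2
      cases S1 with
      | cherry p x y => exact absurd h12 (by simp [Shape.IsReticShape])
      | retic px py x y =>
        cases S2 with
        | cherry p' x' y' => exact absurd h22 (by simp [Shape.IsReticShape])
        | retic px' py' x' y' =>
          have hpx : px = px' := heq
          subst hpx
          have hv1 := (hvalid _ ((hPmem _).1 h11)).2
          have hv2 := (hvalid _ ((hPmem _).1 h21)).2
          have ha1 : (px, x) ∈ N.arcs :=
            (hvalid _ ((hPmem _).1 h11)).1 (by simp [Shape.shapeArcs])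
          have ha2 : (px, x') ∈ N.arcs :=
            (hvalid _ ((hPmem _).1 h21)).1 (by simp [Shape.shapeArcs])
          have hxx : x = x' := houtuniq px x x' ha1 ha2 hv1.1.2.2
          subst hxx
          have hmem1 : ((px, x) : V × V) ∈ (Shape.retic px py x y).shapeArcs := by
            simp [Shape.shapeArcs]
          have hmem2 : ((px, x) : V × V) ∈ (Shape.retic px py' x y').shapeArcs := by
            simp [Shape.shapeArcs]
          have hr := hnoroot _ ((hPmem _).1 h11) _ hmem1
          obtain ⟨S0, hS0, huniq⟩ := hcover (px, x) ha1 hr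
          exact (huniq _ ⟨(hPmem _).1 h11, hmem1⟩).trans
            (huniq _ ⟨(hPmem _).1 h21, hmem2⟩).symm
    · intro v hv
      obtain ⟨hv1, hv2⟩ := Finset.mem_filter.1 hv
      have hod : N.outdeg v = 1 := hv2.2.2
      have hne : {a ∈ N.arcs | a.1 = v}.Nonempty := by
        apply Set.nonempty_of_ncard_ne_zero
        have : {a ∈ N.arcs | a.1 = v}.ncard = N.outdeg v := rfl
        omega
      obtain ⟨a, ha, hav⟩ := hne
      have hvroot : v ≠ N.root := by
        intro h
        have := hv2.2.1
        rw [h, hrin] at this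
        omega
      obtain ⟨S, ⟨hSP, haS⟩, -⟩ := hcover a ha (hav ▸ hvroot)
      cases S with
      | cherry p x y =>
        have hvS := hvalid _ hSP
        have hax : (p, x) ∈ N.arcs := hvS.1 (by simp [Shape.shapeArcs])
        have hay : (p, y) ∈ N.arcs := hvS.1 (by simp [Shape.shapeArcs])
        have hpv : p = v := by
          simp only [Shape.shapeArcs, Set.mem_insert_iff, Set.mem_singleton_iff] at haS
          rcases haS with rfl | rfl <;> exact hav
        subst hpv
        exact absurd (houtuniq p x y hax hay hod) hvS.2
      | retic px py x y =>
        have hvS := hvalid _ hSP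
        simp only [Shape.shapeArcs, Set.mem_insert_iff, Set.mem_singleton_iff] at haS
        rcases haS with rfl | rfl | rfl
        · refine ⟨Shape.retic px py x y, Finset.mem_filter.2 ⟨(hPmem _).2 hSP, trivial⟩, hav⟩
        · exfalso
          have hapx : (py, px) ∈ N.arcs := hvS.1 (by simp [Shape.shapeArcs])
          have hayy : (py, y) ∈ N.arcs := hvS.1 (by simp [Shape.shapeArcs])
          have hod' : N.outdeg py = 1 := by rw [show py = v from hav]; exact hod
          exact hvS.2.2.2.1 (houtuniq py px y hapx hayy hod')
        · exfalso
          have hapx : (py, px) ∈ N.arcs := hvS.1 (by simp [Shape.shapeArcs])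
          have hayy : (py, y) ∈ N.arcs := hvS.1 (by simp [Shape.shapeArcs])
          have hod' : N.outdeg py = 1 := by rw [show py = v from hav]; exact hod
          exact hvS.2.2.2.1 (houtuniq py px y hapx hayy hod')
  -- identify the goal's ncards with finset cards
  have hRset : {v ∈ N.verts | N.IsReticV v}.ncard = (Wf.filter (fun v => N.IsReticV v)).card := by
    rw [show {v ∈ N.verts | N.IsReticV v} = ↑(Wf.filter (fun v => N.IsReticV v)) by
      ext v; simp [hWmem v], Set.ncard_coe_finset]
  have hLset : {v ∈ N.verts | N.IsLeafV v}.ncard = (Wf.filter (fun v => N.IsLeafV v)).card := by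
    rw [show {v ∈ N.verts | N.IsLeafV v} = ↑(Wf.filter (fun v => N.IsLeafV v)) by
      ext v; simp [hWmem v], Set.ncard_coe_finset]
  have hPcard : P.ncard = Pf.card := by
    rw [← Set.ncard_coe_finset, hPfin.coe_toFinset]
  rw [hRset, hLset, hPcard]
  omega
end

section
/- Every arc set of a rooted binary phylogenetic network (excluding the root arc) admits a unique partition into maximal zig-zag trails. -/
open Net
namespace Net

variable {V : Type*}

/-- A zig-zag trail in the arc set `A`: a nonempty sequence of distinct arcs of `A`
in which consecutive arcs share a tail or share a head. -/
def IsZigZag (A : Set (V × V)) (l : List (V × V)) : Prop :=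
  l ≠ [] ∧ l.Nodup ∧ (∀ a ∈ l, a ∈ A) ∧
    l.Chain' (fun a b => a.1 = b.1 ∨ a.2 = b.2)

/-- A maximal zig-zag trail: not properly contained (as an infix, up to reversal)
in any longer zig-zag trail in `A`. -/
def IsMaximalZigZag (A : Set (V × V)) (l : List (V × V)) : Prop :=
  IsZigZag A l ∧
    ∀ l' : List (V × V), IsZigZag A l' → (l <:+: l' ∨ l <:+: l'.reverse) →
      l'.length = l.length

/-- The non-root arcs of `N`. -/
def nonRootArcs (N : Net V) : Set (V × V) := {a ∈ N.arcs | a.1 ≠ N.root}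

/-- A zig-zag decomposition: a partition of all non-root arcs of `N` into
(arc sets of) maximal zig-zag trails. -/
def IsZigZagDecomp (N : Net V) (D : Set (Set (V × V))) : Prop :=
  (∀ B ∈ D, ∃ l : List (V × V),
      IsMaximalZigZag N.nonRootArcs l ∧ {a | a ∈ l} = B) ∧
  (∀ B ∈ D, ∀ B' ∈ D, B ≠ B' → Disjoint B B') ∧
  (∀ B ∈ D, B.Nonempty) ∧
  ⋃₀ D = N.nonRootArcs

/-- A crown: even length at least 4, closing up (first and last arcs share
a tail or share a head). -/
def IsCrown (l : List (V × V)) : Prop :=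
  4 ≤ l.length ∧ Even l.length ∧
    ∃ a b : V × V, l.head? = some a ∧ l.getLast? = some b ∧ (a.1 = b.1 ∨ a.2 = b.2)

/-- An M-fence: even length at least 2, not a crown, both end tails tree vertices. -/
def IsMFence (N : Net V) (l : List (V × V)) : Prop :=
  2 ≤ l.length ∧ Even l.length ∧ ¬ IsCrown l ∧
    ∃ a b : V × V, l.head? = some a ∧ l.getLast? = some b ∧
      N.IsTreeV a.1 ∧ N.IsTreeV b.1

/-- An N-fence: odd length, exactly one of the two end tails is a reticulation. -/
def IsNFence (N : Net V) (l : List (V × V)) : Prop :=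
  Odd l.length ∧
    ∃ a b : V × V, l.head? = some a ∧ l.getLast? = some b ∧
      ((N.IsReticV a.1 ∧ ¬ N.IsReticV b.1) ∨ (¬ N.IsReticV a.1 ∧ N.IsReticV b.1))

/-- A W-fence: even length at least 2, both end tails reticulations. -/
def IsWFence (N : Net V) (l : List (V × V)) : Prop :=
  2 ≤ l.length ∧ Even l.length ∧
    ∃ a b : V × V, l.head? = some a ∧ l.getLast? = some b ∧
      N.IsReticV a.1 ∧ N.IsReticV b.1

end Net


/-!
Call two distinct arcs zig-zag adjacent if they share a tail or a head, so that consecutive arcs of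
a zig-zag trail are adjacent. In a binary network at most two arcs leave and at most two enter any
vertex, hence every arc is adjacent to at most two others. A maximal trail therefore contains every
arc adjacent to one of its arcs: an end arc would otherwise extend the trail, and an interior arc
already has both its neighbours on it. So the arc set of a maximal trail is the connected component
of the adjacency relation through any of its arcs. These components partition the non-root arcs,
finiteness provides a maximal trail through every arc, and any zig-zag decomposition consists of
exactly these components.
-/

theorem Set.eq_of_ne_of_encard_le_two {α : Type*} {s : Set α} (hs : s.encard ≤ 2)
    {c x y : α} (hc : c ∈ s) (hx : x ∈ s) (hy : y ∈ s) (hxc : x ≠ c) (hyc : y ≠ c) :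
    x = y := by
  by_contra hxy
  have hthree : ({c, x, y} : Set α).encard = 3 :=
    Set.encard_eq_three.mpr ⟨c, x, y, hxc.symm, hyc.symm, hxy, rfl⟩
  have hsub : ({c, x, y} : Set α) ⊆ s := by simp [Set.insert_subset_iff, hc, hx, hy]
  have := (Set.encard_le_encard hsub).trans hs
  rw [hthree] at this
  exact absurd this (by decide)

namespace Net

open Relation

variable {V : Type*} {A : Set (V × V)}

def ZigZagAdj (A : Set (V × V)) (a b : V × V) : Prop :=
  a ∈ A ∧ b ∈ A ∧ a ≠ b ∧ (a.1 = b.1 ∨ a.2 = b.2)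

instance (A : Set (V × V)) : Std.Symm (ZigZagAdj A) where
  symm _ _ := fun ⟨ha, hb, hne, h⟩ => ⟨hb, ha, hne.symm, h.imp Eq.symm Eq.symm⟩

def IsBinary (A : Set (V × V)) : Prop :=
  (∀ v, {a ∈ A | a.1 = v}.encard ≤ 2) ∧ ∀ v, {a ∈ A | a.2 = v}.encard ≤ 2

theorem IsBinary.mono {B : Set (V × V)} (hA : IsBinary A) (hBA : B ⊆ A) : IsBinary B := by
  refine ⟨fun v => le_trans ?_ (hA.1 v), fun v => le_trans ?_ (hA.2 v)⟩ <;>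
    exact Set.encard_le_encard fun _ hx => ⟨hBA hx.1, hx.2⟩

theorem IsBinary.eq_or_eq_of_zigZagAdj (hA : IsBinary A) {c p q d : V × V}
    (hp : ZigZagAdj A c p) (hq : ZigZagAdj A c q) (hd : ZigZagAdj A c d) (hpq : p ≠ q) :
    d = p ∨ d = q := by
  have tail : ∀ {x y}, ZigZagAdj A c x → ZigZagAdj A c y → c.1 = x.1 → c.1 = y.1 → x = y :=
    fun ⟨hc, hx, hcx, _⟩ ⟨_, hy, hcy, _⟩ hx1 hy1 =>
      Set.eq_of_ne_of_encard_le_two (hA.1 c.1) ⟨hc, rfl⟩ ⟨hx, hx1.symm⟩ ⟨hy, hy1.symm⟩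
        (Ne.symm hcx) (Ne.symm hcy)
  have head : ∀ {x y}, ZigZagAdj A c x → ZigZagAdj A c y → c.2 = x.2 → c.2 = y.2 → x = y :=
    fun ⟨hc, hx, hcx, _⟩ ⟨_, hy, hcy, _⟩ hx2 hy2 =>
      Set.eq_of_ne_of_encard_le_two (hA.2 c.2) ⟨hc, rfl⟩ ⟨hx, hx2.symm⟩ ⟨hy, hy2.symm⟩
        (Ne.symm hcx) (Ne.symm hcy)
  rcases hp.2.2.2 with hp' | hp' <;> rcases hq.2.2.2 with hq' | hq' <;>
    rcases hd.2.2.2 with hd' | hd'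
  all_goals first
    | exact absurd (tail hp hq hp' hq') hpq
    | exact absurd (head hp hq hp' hq') hpq
    | exact .inl (tail hd hp hd' hp')
    | exact .inl (head hd hp hd' hp')
    | exact .inr (tail hd hq hd' hq')
    | exact .inr (head hd hq hd' hq')

theorem IsZigZag.reverse {l : List (V × V)} (hl : IsZigZag A l) : IsZigZag A l.reverse := by
  obtain ⟨hne, hnd, hmem, hch⟩ := hl
  refine ⟨by simpa using hne, by simpa using hnd, by simpa using hmem, ?_⟩
  exact List.isChain_reverse.mpr (hch.imp fun _ _ h => h.imp Eq.symm Eq.symm)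

theorem IsZigZag.isChain_zigZagAdj {l : List (V × V)} (hl : IsZigZag A l) :
    l.IsChain (ZigZagAdj A) := by
  obtain ⟨-, hnd, hmem, hch : l.IsChain _⟩ := hl
  rw [List.isChain_iff_getElem] at hch ⊢
  intro i hi
  refine ⟨hmem _ (List.getElem_mem _), hmem _ (List.getElem_mem _), fun h => ?_, hch i hi⟩
  simpa using (hnd.getElem_inj_iff).mp h

theorem IsZigZag.reflTransGen_zigZagAdj {l : List (V × V)} (hl : IsZigZag A l) {a b : V × V}
    (ha : a ∈ l) (hb : b ∈ l) : ReflTransGen (ZigZagAdj A) a b := by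
  have fromHead := hl.isChain_zigZagAdj.induction (ReflTransGen (ZigZagAdj A) (l.head hl.1))
    l (fun _ _ hxy hx => hx.tail hxy) fun _ => .refl
  exact (symm (fromHead a ha)).trans (fromHead b hb)

theorem IsZigZag.length_le_ncard (hfin : A.Finite) {l : List (V × V)} (hl : IsZigZag A l) :
    l.length ≤ A.ncard := by
  classical
  rw [← List.toFinset_card_of_nodup hl.2.1, ← Set.ncard_coe_finset]
  exact Set.ncard_le_ncard (fun x hx => hl.2.2.1 x (by simpa using hx)) hfin

theorem IsZigZag.cons {c d : V × V} {t : List (V × V)} (hl : IsZigZag A (c :: t))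
    (hdc : ZigZagAdj A d c) (hdl : d ∉ c :: t) : IsZigZag A (d :: c :: t) :=
  ⟨List.cons_ne_nil _ _, List.nodup_cons.mpr ⟨hdl, hl.2.1⟩,
    List.forall_mem_cons.mpr ⟨hdc.1, hl.2.2.1⟩, List.isChain_cons_cons.mpr ⟨hdc.2.2.2, hl.2.2.2⟩⟩

theorem IsMaximalZigZag.reverse {l : List (V × V)} (hl : IsMaximalZigZag A l) :
    IsMaximalZigZag A l.reverse := by
  refine ⟨hl.1.reverse, fun l' hl' hinf => ?_⟩
  rw [List.length_reverse, ← List.length_reverse (as := l')]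
  refine hl.2 _ hl'.reverse ?_
  rw [List.reverse_reverse]
  rcases hinf with h | h
  · exact .inl (List.reverse_infix.mp (by simpa using h))
  · exact .inr (List.reverse_infix.mp h)

theorem IsMaximalZigZag.mem_of_zigZagAdj_head {c d : V × V} {t : List (V × V)}
    (hl : IsMaximalZigZag A (c :: t)) (hcd : ZigZagAdj A c d) : d ∈ c :: t := by
  by_contra hd
  have := hl.2 _ (hl.1.cons (symm hcd) hd) (.inl (List.suffix_cons d _).isInfix)
  simp at this

theorem IsMaximalZigZag.mem_of_zigZagAdj (hA : IsBinary A) {l : List (V × V)}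
    (hl : IsMaximalZigZag A l) {c d : V × V} (hc : c ∈ l) (hcd : ZigZagAdj A c d) : d ∈ l := by
  obtain ⟨s, t, rfl⟩ := List.append_of_mem hc
  rcases t with _ | ⟨q, t⟩
  · have hrev : IsMaximalZigZag A (c :: s.reverse) := by simpa using hl.reverse
    simpa [or_comm] using hrev.mem_of_zigZagAdj_head hcd
  rcases s.eq_nil_or_concat' with rfl | ⟨s, p, rfl⟩
  · exact hl.mem_of_zigZagAdj_head hcd
  have hinf : [p, c, q] <:+: s ++ [p] ++ c :: q :: t := ⟨s, t, by simp⟩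
  have hpcq := hl.1.isChain_zigZagAdj.infix hinf
  have hpq : p ≠ q := fun hpq => by
    simpa [hpq] using hl.1.2.1.sublist hinf.sublist
  simp only [List.isChain_cons_cons, List.isChain_singleton, and_true] at hpcq
  rcases hA.eq_or_eq_of_zigZagAdj (symm hpcq.1) hpcq.2 hcd hpq with rfl | rfl <;>
    simp

theorem IsMaximalZigZag.setOf_mem_eq (hA : IsBinary A) {l : List (V × V)}
    (hl : IsMaximalZigZag A l) {a : V × V} (ha : a ∈ l) :
    {x | x ∈ l} = {b | ReflTransGen (ZigZagAdj A) a b} := by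
  ext b
  refine ⟨hl.1.reflTransGen_zigZagAdj ha, fun hb => ?_⟩
  induction hb with
  | refl => exact ha
  | tail _ hcd hc => exact hl.mem_of_zigZagAdj hA hc hcd

theorem exists_isMaximalZigZag_mem (hfin : A.Finite) {a : V × V} (ha : a ∈ A) :
    ∃ l, IsMaximalZigZag A l ∧ a ∈ l := by
  set lengths : Set ℕ := {n | ∃ l, IsZigZag A l ∧ a ∈ l ∧ l.length = n}
  have hbdd : BddAbove lengths := ⟨A.ncard, by
    rintro _ ⟨l, hl, -, rfl⟩
    exact hl.length_le_ncard hfin⟩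
  have hsingle : IsZigZag A [a] := ⟨by simp, by simp, by simpa using ha, List.isChain_singleton _⟩
  have hne : lengths.Nonempty := ⟨1, [a], hsingle, List.mem_singleton_self a, rfl⟩
  obtain ⟨l, hl, hal, hlen⟩ := Nat.sSup_mem hne hbdd
  have longest : ∀ {m}, IsZigZag A m → a ∈ m → m.length ≤ l.length := fun hm ham =>
    hlen ▸ le_csSup hbdd ⟨_, hm, ham, rfl⟩
  refine ⟨l, ⟨hl, fun l' hl' hinf => ?_⟩, hal⟩
  rcases hinf with hinf | hinf
  · exact le_antisymm (longest hl' (hinf.subset hal)) hinf.length_le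
  · have := longest hl'.reverse (hinf.subset hal)
    have := hinf.length_le
    simp only [List.length_reverse] at *
    omega

def maximalZigZagArcSets (A : Set (V × V)) : Set (Set (V × V)) :=
  {B | ∃ l, IsMaximalZigZag A l ∧ {a | a ∈ l} = B}

theorem isZigZagDecomp_maximalZigZagArcSets {N : Net V} (hA : IsBinary N.nonRootArcs)
    (hfin : N.nonRootArcs.Finite) : N.IsZigZagDecomp (maximalZigZagArcSets N.nonRootArcs) := by
  refine ⟨fun B hB => hB, ?_, ?_, ?_⟩
  · rintro _ ⟨l₁, hl₁, rfl⟩ _ ⟨l₂, hl₂, rfl⟩ hne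
    refine Set.disjoint_left.mpr fun x hx₁ hx₂ => hne ?_
    rw [hl₁.setOf_mem_eq hA hx₁, hl₂.setOf_mem_eq hA hx₂]
  · rintro _ ⟨l, hl, rfl⟩
    exact ⟨l.head hl.1.1, List.head_mem _⟩
  · ext x
    refine ⟨?_, fun hx => ?_⟩
    · rintro ⟨_, ⟨l, hl, rfl⟩, hx⟩
      exact hl.1.2.2.1 x hx
    obtain ⟨l, hl, hxl⟩ := exists_isMaximalZigZag_mem hfin hx
    exact ⟨_, ⟨l, hl, rfl⟩, hxl⟩

theorem IsZigZagDecomp.eq_maximalZigZagArcSets {N : Net V} (hA : IsBinary N.nonRootArcs)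
    {D : Set (Set (V × V))} (hD : N.IsZigZagDecomp D) :
    D = maximalZigZagArcSets N.nonRootArcs := by
  refine Set.Subset.antisymm hD.1 ?_
  rintro _ ⟨l, hl, rfl⟩
  have ha : l.head hl.1.1 ∈ ⋃₀ D := by
    rw [hD.2.2.2]
    exact hl.1.2.2.1 _ (List.head_mem _)
  obtain ⟨B, hB, haB⟩ := ha
  obtain ⟨l', hl', rfl⟩ := hD.1 B hB
  rwa [hl.setOf_mem_eq hA (List.head_mem hl.1.1), ← hl'.setOf_mem_eq hA haB]

theorem IsPhylo.finite_nonRootArcs {N : Net V} (hN : N.IsPhylo) : N.nonRootArcs.Finite :=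
  hN.2.1.subset (Set.sep_subset _ _)

theorem IsPhylo.isBinary_arcs {N : Net V} (hN : N.IsPhylo) : IsBinary N.arcs := by
  obtain ⟨-, hfin, -, hends, hroot_in, hroot_out, hclass, -⟩ := hN
  have bound : ∀ f : V × V → V, (∀ a ∈ N.arcs, f a ∈ N.verts) →
      (∀ v ∈ N.verts, {a ∈ N.arcs | f a = v}.ncard ≤ 2) →
      ∀ v, {a ∈ N.arcs | f a = v}.encard ≤ 2 := by
    intro f hf hle v
    rcases Set.eq_empty_or_nonempty {a ∈ N.arcs | f a = v} with h | ⟨a, ha, rfl⟩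
    · simp [h]
    · rw [← (hfin.subset (Set.sep_subset _ _)).cast_ncard_eq]
      exact_mod_cast hle _ (hf a ha)
  refine ⟨bound Prod.fst (fun a ha => (hends a ha).1) fun v hv => ?_,
    bound Prod.snd (fun a ha => (hends a ha).2) fun v hv => ?_⟩
  · change N.outdeg v ≤ 2
    rcases hclass v hv with rfl | h | h | h
    · simp [hroot_out]
    all_goals simp [h.2.2]
  · change N.indeg v ≤ 2
    rcases hclass v hv with rfl | h | h | h
    · simp [hroot_in]
    all_goals simp [h.2.1]

end Net

/-- The arc set of a rooted binary phylogenetic network (excluding the root arc)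
admits a unique partition into maximal zig-zag trails. -/
theorem unique_zigzag_decomposition {V : Type*} (N : Net V) (hN : N.IsPhylo) :
    ∃! D : Set (Set (V × V)), N.IsZigZagDecomp D := by
  have hA : Net.IsBinary N.nonRootArcs := hN.isBinary_arcs.mono (Set.sep_subset _ _)
  exact ⟨_, Net.isZigZagDecomp_maximalZigZagArcSets hA hN.finite_nonRootArcs,
    fun _ hD => hD.eq_maximalZigZagArcSets hA⟩
end

section
/- Let N be a rooted binary phylogenetic network containing an N-fence of length at least 3, i.e., a maximal zig-zag trail (a_1,...,a_k) with k odd and tail(a_1) a reticulation. Then in every cherry cover of N, for each even index 2j with 1 ≤ j ≤ (k-1)/2, the arcs a_{2j} and a_{2j+1} are covered by a common reticulation cherry shape. -/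
open Net
/-!
Since the first tail is a reticulation (out-degree 1) and all in- and out-degrees are at most 2,
the trail alternates: `a_{2j-1}, a_{2j}` share a head `h_j`, necessarily a reticulation, and
`a_{2j}, a_{2j+1}` share a tail. The out-arc of `h_j` can only be covered by a reticulation cherry
shape with `p_x = h_j`, whose middle arc `p_y p_x` is then `a_{2j-1}` or `a_{2j}`. It cannot be
`a_{2j-1}`: for `j = 1` its tail is a reticulation, and for `j > 1` that arc is already a side arc
of the shape found for `j - 1`. So the middle arc is `a_{2j}`, and the third arc, an out-arc of
the tail of `a_{2j}` other than `a_{2j}`, is `a_{2j+1}`.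
-/

theorem Set.eq_or_eq_of_ncard_le_two {α : Type*} {s : Set α} (hs : s.Finite)
    (hcard : s.ncard ≤ 2) {a b c : α} (ha : a ∈ s) (hb : b ∈ s) (hab : a ≠ b)
    (hc : c ∈ s) : c = a ∨ c = b := by
  have hpair : ({a, b} : Set α) = s :=
    Set.eq_of_subset_of_ncard_le (Set.insert_subset ha (Set.singleton_subset_iff.mpr hb))
      (by rwa [Set.ncard_pair hab]) hs
  rw [← hpair] at hc
  exact hc

namespace Net

variable {V : Type*} {N : Net V}

theorem IsReticV.eq_of_mem_arcs {v x y : V} (hv : N.IsReticV v) (hx : (v, x) ∈ N.arcs)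
    (hy : (v, y) ∈ N.arcs) : x = y := by
  obtain ⟨a, ha⟩ := Set.ncard_eq_one.mp hv.2.2
  have hxa : ((v, x) : V × V) ∈ {a ∈ N.arcs | a.1 = v} := ⟨hx, rfl⟩
  have hya : ((v, y) : V × V) ∈ {a ∈ N.arcs | a.1 = v} := ⟨hy, rfl⟩
  rw [ha, Set.mem_singleton_iff] at hxa hya
  exact (Prod.ext_iff.mp (hxa.trans hya.symm)).2

theorem IsReticV.exists_mem_arcs {v : V} (hv : N.IsReticV v) : ∃ z, (v, z) ∈ N.arcs := by
  obtain ⟨a, ha⟩ := Set.ncard_eq_one.mp hv.2.2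
  have haa : a ∈ {a ∈ N.arcs | a.1 = v} := by rw [ha]; rfl
  exact ⟨a.2, by rw [← haa.2]; exact haa.1⟩

namespace IsPhylo

theorem indeg_le_two (hN : N.IsPhylo) {v : V} (hv : v ∈ N.verts) : N.indeg v ≤ 2 := by
  obtain ⟨-, -, -, -, hroot, -, hclass, -⟩ := hN
  rcases hclass v hv with rfl | h | h | h <;> grind [IsTreeV, IsReticV, IsLeafV]

theorem outdeg_le_two (hN : N.IsPhylo) {v : V} (hv : v ∈ N.verts) : N.outdeg v ≤ 2 := by
  obtain ⟨-, -, -, -, -, hroot, hclass, -⟩ := hN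
  rcases hclass v hv with rfl | h | h | h <;> grind [IsTreeV, IsReticV, IsLeafV]

theorem ne_root_of_isReticV (hN : N.IsPhylo) {v : V} (hv : N.IsReticV v) : v ≠ N.root := by
  rintro rfl
  have hroot := hN.2.2.2.2.1
  rw [hv.2.1] at hroot
  omega

theorem eq_or_eq_of_snd_eq (hN : N.IsPhylo) {a b c : V × V} (ha : a ∈ N.arcs)
    (hb : b ∈ N.arcs) (hc : c ∈ N.arcs) (hab : a ≠ b) (hba : b.2 = a.2) (hca : c.2 = a.2) :
    c = a ∨ c = b :=
  Set.eq_or_eq_of_ncard_le_two (hN.2.1.subset fun _ h => h.1)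
    (hN.indeg_le_two (hN.2.2.2.1 a ha).2) ⟨ha, rfl⟩ ⟨hb, hba⟩ hab ⟨hc, hca⟩

theorem eq_or_eq_of_fst_eq (hN : N.IsPhylo) {a b c : V × V} (ha : a ∈ N.arcs)
    (hb : b ∈ N.arcs) (hc : c ∈ N.arcs) (hab : a ≠ b) (hba : b.1 = a.1) (hca : c.1 = a.1) :
    c = a ∨ c = b :=
  Set.eq_or_eq_of_ncard_le_two (hN.2.1.subset fun _ h => h.1)
    (hN.outdeg_le_two (hN.2.2.2.1 a ha).1) ⟨ha, rfl⟩ ⟨hb, hba⟩ hab ⟨hc, hca⟩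

theorem isReticV_of_snd_eq (hN : N.IsPhylo) {a b : V × V} (ha : a ∈ N.arcs)
    (hb : b ∈ N.arcs) (hab : a ≠ b) (hba : b.2 = a.2) : N.IsReticV a.2 := by
  have hv := (hN.2.2.2.1 a ha).2
  have htwo : 2 ≤ N.indeg a.2 := by
    rw [← Set.ncard_pair hab]
    exact Set.ncard_le_ncard
      (Set.insert_subset ⟨ha, rfl⟩ (Set.singleton_subset_iff.mpr ⟨hb, hba⟩))
      (hN.2.1.subset fun _ h => h.1)
  obtain ⟨-, -, -, -, hroot, -, hclass, -⟩ := hN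
  rcases hclass _ hv with h | h | h | h
  · rw [h, hroot] at htwo; omega
  · rw [h.2.1] at htwo; omega
  · exact h
  · rw [h.2.1] at htwo; omega

theorem snd_eq_of_fst_eq (hN : N.IsPhylo) {a b c : V × V} (ha : a ∈ N.arcs)
    (hb : b ∈ N.arcs) (hc : c ∈ N.arcs) (hab : a ≠ b) (hac : a ≠ c) (hbc : b ≠ c)
    (hba : b.1 = a.1) (hadj : b.1 = c.1 ∨ b.2 = c.2) : b.2 = c.2 := by
  refine hadj.resolve_left fun hcb => ?_
  rcases hN.eq_or_eq_of_fst_eq ha hb hc hab hba (hcb.symm.trans hba) with h | h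
  exacts [hac h.symm, hbc h.symm]

theorem fst_eq_of_snd_eq (hN : N.IsPhylo) {a b c : V × V} (ha : a ∈ N.arcs)
    (hb : b ∈ N.arcs) (hc : c ∈ N.arcs) (hab : a ≠ b) (hac : a ≠ c) (hbc : b ≠ c)
    (hba : b.2 = a.2) (hadj : b.1 = c.1 ∨ b.2 = c.2) : b.1 = c.1 := by
  refine hadj.resolve_right fun hcb => ?_
  rcases hN.eq_or_eq_of_snd_eq ha hb hc hab hba (hcb.symm.trans hba) with h | h
  exacts [hac h.symm, hbc h.symm]

end IsPhylo

theorem isReticV_getElem_zero {l : List (V × V)}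
    (hfirst : ∃ a : V × V, l.head? = some a ∧ N.IsReticV a.1) (h0 : 0 < l.length) :
    N.IsReticV l[0].1 := by
  obtain ⟨a, ha, hret⟩ := hfirst
  rw [List.head?_eq_getElem?, List.getElem?_eq_getElem h0, Option.some_inj] at ha
  rwa [ha]

namespace IsZigZag

variable {A : Set (V × V)} {l : List (V × V)}

theorem getElem_mem (hl : IsZigZag A l) (i : ℕ) (hi : i < l.length) : l[i] ∈ A :=
  hl.2.2.1 _ (List.getElem_mem hi)

theorem getElem_ne (hl : IsZigZag A l) {i j : ℕ} (hi : i < l.length) (hj : j < l.length)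
    (hij : i ≠ j) : l[i] ≠ l[j] :=
  fun h => hij (hl.2.1.getElem_inj_iff.mp h)

theorem adj (hl : IsZigZag A l) (i : ℕ) (hi : i + 1 < l.length) :
    l[i].1 = l[i + 1].1 ∨ l[i].2 = l[i + 1].2 :=
  List.isChain_iff_getElem.mp hl.2.2.2 i hi

theorem alternates (hN : N.IsPhylo) (hA : A ⊆ N.arcs) (hl : IsZigZag A l)
    (hfirst : ∃ a : V × V, l.head? = some a ∧ N.IsReticV a.1) :
    ∀ m (hm : 2 * m + 2 < l.length),
      l[2 * m].2 = l[2 * m + 1].2 ∧ l[2 * m + 1].1 = l[2 * m + 2].1 := by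
  have mem (i : ℕ) (hi : i < l.length) : l[i] ∈ N.arcs := hA (hl.getElem_mem i hi)
  intro m
  induction m with
  | zero =>
    intro hm
    have hhead : l[0].2 = l[1].2 := by
      refine (hl.adj 0 (by omega)).resolve_left fun htail =>
        hl.getElem_ne (i := 0) (j := 1) (by omega) (by omega) (by omega) (Prod.ext htail ?_)
      refine (isReticV_getElem_zero hfirst (by omega)).eq_of_mem_arcs (mem 0 (by omega)) ?_
      rw [htail]
      exact mem 1 (by omega)
    refine ⟨hhead, hN.fst_eq_of_snd_eq (mem 0 (by omega)) (mem 1 (by omega)) (mem 2 hm)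
      (hl.getElem_ne _ _ (by omega)) (hl.getElem_ne _ _ (by omega))
      (hl.getElem_ne _ _ (by omega)) hhead.symm (hl.adj 1 hm)⟩
  | succ m ih =>
    intro hm
    show l[2 * m + 2].2 = l[2 * m + 3].2 ∧ l[2 * m + 3].1 = l[2 * m + 4].1
    have hhead := hN.snd_eq_of_fst_eq (mem (2 * m + 1) (by omega))
      (mem (2 * m + 2) (by omega)) (mem (2 * m + 3) (by omega))
      (hl.getElem_ne _ _ (by omega)) (hl.getElem_ne _ _ (by omega))
      (hl.getElem_ne _ _ (by omega)) (ih (by omega)).2.symm (hl.adj (2 * m + 2) (by omega))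
    exact ⟨hhead, hN.fst_eq_of_snd_eq (mem (2 * m + 2) (by omega))
      (mem (2 * m + 3) (by omega)) (mem (2 * m + 4) hm)
      (hl.getElem_ne _ _ (by omega)) (hl.getElem_ne _ _ (by omega))
      (hl.getElem_ne _ _ (by omega)) hhead.symm (hl.adj (2 * m + 3) hm)⟩

end IsZigZag

namespace IsCherryCover

variable {P : Set (Shape V)}

theorem eq_of_mem_shapeArcs (hP : N.IsCherryCover P) {S T : Shape V} {e : V × V}
    (hS : S ∈ P) (hT : T ∈ P) (heS : e ∈ S.shapeArcs) (heT : e ∈ T.shapeArcs) : S = T := by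
  obtain ⟨U, -, hU⟩ := hP.2.1 e ((hP.1 S hS).1 heS) (hP.2.2 S hS e heS)
  exact (hU S ⟨hS, heS⟩).trans (hU T ⟨hT, heT⟩).symm

theorem retic_notMem_of_isReticV (hP : N.IsCherryCover P) {h t x y : V}
    (ht : N.IsReticV t) : Shape.retic h t x y ∉ P := by
  intro hS
  obtain ⟨hsub, -, -, hhy, -⟩ := hP.1 _ hS
  exact hhy (ht.eq_of_mem_arcs (hsub (by simp [Shape.shapeArcs]))
    (hsub (by simp [Shape.shapeArcs])))

theorem retic_notMem_of_retic_mem (hP : N.IsCherryCover P) {px py x y : V}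
    (hS : Shape.retic px py x y ∈ P) (x' y' : V) : Shape.retic y py x' y' ∉ P := by
  intro hT
  obtain ⟨-, -, hpxy, -⟩ := (hP.1 _ hS).2
  exact hpxy (Shape.retic.inj (hP.eq_of_mem_shapeArcs hS hT (e := (py, y))
    (by simp [Shape.shapeArcs]) (by simp [Shape.shapeArcs]))).1

theorem exists_retic_of_isReticV (hP : N.IsCherryCover P) {h z : V} (hh : N.IsReticV h)
    (hroot : h ≠ N.root) (hz : (h, z) ∈ N.arcs) :
    ∃ p y, Shape.retic h p z y ∈ P ∧ (p, h) ∈ N.arcs ∧ (p, y) ∈ N.arcs ∧ y ≠ h := by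
  obtain ⟨S, ⟨hSP, hzS⟩, -⟩ := hP.2.1 _ hz hroot
  obtain ⟨hsub, hval⟩ := hP.1 S hSP
  cases S with
  | cherry p x y =>
    simp only [Shape.shapeArcs, Set.mem_insert_iff, Set.mem_singleton_iff, Prod.mk.injEq] at hzS
    obtain ⟨rfl, -⟩ | ⟨rfl, -⟩ := hzS <;>
      exact absurd (hh.eq_of_mem_arcs (hsub (by simp [Shape.shapeArcs]))
        (hsub (by simp [Shape.shapeArcs]))) hval
  | retic px py x y =>
    obtain ⟨-, -, hpxy, -⟩ := hval
    have hmid : (py, px) ∈ N.arcs := hsub (by simp [Shape.shapeArcs])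
    have hside : (py, y) ∈ N.arcs := hsub (by simp [Shape.shapeArcs])
    simp only [Shape.shapeArcs, Set.mem_insert_iff, Set.mem_singleton_iff, Prod.mk.injEq] at hzS
    rcases hzS with ⟨rfl, rfl⟩ | ⟨rfl, -⟩ | ⟨rfl, -⟩
    · exact ⟨py, y, hSP, hmid, hside, fun e => hpxy e.symm⟩
    all_goals exact absurd (hh.eq_of_mem_arcs hmid hside) hpxy

theorem exists_retic_of_zigzag_step (hN : N.IsPhylo) (hP : N.IsCherryCover P)
    {a b c : V × V} (ha : a ∈ N.arcs) (hb : b ∈ N.arcs) (hc : c ∈ N.arcs) (hab : a ≠ b)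
    (hbc : b ≠ c) (hhead : a.2 = b.2) (htail : b.1 = c.1)
    (ha_mid : ∀ x y, Shape.retic a.2 a.1 x y ∉ P) :
    ∃ z, Shape.retic b.2 b.1 z c.2 ∈ P := by
  have hret : N.IsReticV b.2 := hN.isReticV_of_snd_eq hb ha hab.symm hhead
  obtain ⟨z, hz⟩ := hret.exists_mem_arcs
  obtain ⟨p, y, hS, hp, hy, hyb⟩ :=
    hP.exists_retic_of_isReticV hret (hN.ne_root_of_isReticV hret) hz
  rcases hN.eq_or_eq_of_snd_eq hb ha hp hab.symm hhead rfl with hpb | hpa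
  · obtain rfl : p = b.1 := congrArg Prod.fst hpb
    have hyc : (b.1, y) = c :=
      (hN.eq_or_eq_of_fst_eq hb hc hy hbc htail.symm rfl).resolve_left
        fun e => hyb (congrArg Prod.snd e)
    exact ⟨z, by rwa [← hyc]⟩
  · obtain rfl : p = a.1 := congrArg Prod.fst hpa
    rw [← hhead] at hS
    exact absurd hS (ha_mid z y)

theorem exists_retic_of_nfence (hN : N.IsPhylo) (hP : N.IsCherryCover P)
    {l : List (V × V)} (hl : IsZigZag N.nonRootArcs l)
    (hfirst : ∃ a : V × V, l.head? = some a ∧ N.IsReticV a.1) :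
    ∀ m (hm : 2 * m + 2 < l.length),
      ∃ z, Shape.retic l[2 * m + 1].2 l[2 * m + 1].1 z l[2 * m + 2].2 ∈ P := by
  have hA : N.nonRootArcs ⊆ N.arcs := fun _ h => h.1
  have halt := hl.alternates hN hA hfirst
  have mem (i : ℕ) (hi : i < l.length) : l[i] ∈ N.arcs := hA (hl.getElem_mem i hi)
  have step (m : ℕ) (hm : 2 * m + 2 < l.length)
      (hmid : ∀ x y, Shape.retic l[2 * m].2 l[2 * m].1 x y ∉ P) :
      ∃ z, Shape.retic l[2 * m + 1].2 l[2 * m + 1].1 z l[2 * m + 2].2 ∈ P :=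
    hP.exists_retic_of_zigzag_step hN (mem _ (by omega)) (mem _ (by omega)) (mem _ hm)
      (hl.getElem_ne _ _ (by omega)) (hl.getElem_ne _ _ (by omega)) (halt m hm).1
      (halt m hm).2 hmid
  intro m
  induction m with
  | zero =>
    exact fun hm => step 0 hm fun _ _ =>
      hP.retic_notMem_of_isReticV (isReticV_getElem_zero hfirst (by omega))
  | succ m ih =>
    intro hm
    obtain ⟨z, hz⟩ := ih (by omega)
    refine step (m + 1) hm ?_
    show ∀ x y, Shape.retic l[2 * m + 2].2 l[2 * m + 2].1 x y ∉ P
    rw [← (halt m (by omega)).2]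
    exact hP.retic_notMem_of_retic_mem hz

end IsCherryCover

end Net

/-- In every cherry cover of a network containing an N-fence `(a_1,…,a_k)` of
length at least 3 (k odd, tail of `a_1` a reticulation), for each even index
`2j` the arcs `a_{2j}` and `a_{2j+1}` are covered by a common reticulation
cherry shape. -/
theorem nfence_cover_structure {V : Type*} (N : Net V) (hN : N.IsPhylo)
    (P : Set (Shape V)) (hP : N.IsCherryCover P)
    (l : List (V × V)) (hl : Net.IsMaximalZigZag N.nonRootArcs l)
    (hfirst : ∃ a : V × V, l.head? = some a ∧ N.IsReticV a.1) :
    ∀ j : ℕ, 1 ≤ j → ∀ hj : 2 * j + 1 ≤ l.length,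
      ∃ S : Shape V, S ∈ P ∧ S.IsReticShape ∧
        l.get ⟨2 * j - 1, by omega⟩ ∈ S.shapeArcs ∧
        l.get ⟨2 * j, by omega⟩ ∈ S.shapeArcs := by
  intro j hj1 hj
  obtain ⟨m, rfl⟩ : ∃ m, j = m + 1 := ⟨j - 1, by omega⟩
  obtain ⟨z, hS⟩ := hP.exists_retic_of_nfence hN hl.1 hfirst m (by omega)
  have htail := (hl.1.alternates hN (fun _ h => h.1) hfirst m (by omega)).2
  refine ⟨_, hS, trivial, ?_, ?_⟩
  · show l[2 * m + 1] ∈ _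
    simp [Shape.shapeArcs]
  · show l[2 * m + 2] ∈ _
    simp [Shape.shapeArcs, htail]
end
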